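/- Let t ≥ 2 be an integer. The largest size of a (t, t+1)-core partition with distinct parts is ⌊t(t+1)/6⌋. (A (t, t+1)-core partition with distinct parts of this size exists, and every such partition has size at most this value.) -/

import Mathlib

/-- A partition: a finite weakly decreasing list of positive integers. -/
structure Partn where
  parts : List ℕ
  pos : ∀ p ∈ parts, 0 < p
  sorted : parts.Pairwise (· ≥ ·)

namespace Partn

/-- The size of a partition: the sum of its parts. -/
def size (l : Partn) : ℕ := l.parts.sum

/-- The number of rows `k` (0-indexed) with `λ_k ≥ j` (the length of column `j`). -/
def colLen (l : Partn) (j : ℕ) : ℕ := (l.parts.filter (fun p => j ≤ p)).length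

/-- The hook length of the box in row `i` (0-indexed) and column `j` (1-indexed):
`λ_i − j + #{k : λ_k ≥ j} − i + 1` (with 1-indexed rows). -/
def hook (l : Partn) (i j : ℕ) : ℕ :=
  (l.parts.getD i 0 - j) + (l.colLen j - (i + 1)) + 1

/-- A partition is a `t`-core if none of its hook lengths is divisible by `t`. -/
def IsCore (t : ℕ) (l : Partn) : Prop :=
  ∀ i j : ℕ, i < l.parts.length → 1 ≤ j → j ≤ l.parts.getD i 0 → ¬ (t ∣ l.hook i j)

/-- A partition has distinct parts if its parts are strictly decreasing. -/
def DistinctParts (l : Partn) : Prop := l.parts.Pairwise (· > ·)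

/-- The β-set of a partition: `{λ_i + ℓ − i : 1 ≤ i ≤ ℓ}` (1-indexed). -/
def betaSet (l : Partn) : Finset ℕ :=
  (Finset.range l.parts.length).image
    (fun i => l.parts.getD i 0 + (l.parts.length - 1 - i))

/-- `nFn t i l` is the number of elements of the β-set of `l` congruent to `i` mod `t`. -/
def nFn (t i : ℕ) (l : Partn) : ℕ :=
  (l.betaSet.filter (fun x => x % t = i)).card

end Partn

/-!
Write `λ₀` for the largest part and `ℓ` for the number of parts. The first-row hook lengths are
the numbers `λ₀ + ℓ - 1 - m` with `m < λ₀ + ℓ` outside the β-set, and every hook length is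
below `λ₀ + ℓ`. Distinct parts make consecutive β-numbers differ by at least 2, so if
`λ₀ + ℓ > t` then `λ₀ + ℓ - 1 - t` or its predecessor lies outside the β-set, giving a first-row
hook equal to `t` or `t + 1`. Thus a distinct-part partition is a `(t, t + 1)`-core exactly when
`λ₀ + ℓ ≤ t`. Its parts are then dominated by the staircase `λ₀, λ₀ - 1, …`, whose size
`ℓ(2λ₀ + 1 - ℓ)/2` is at most `(λ₀ + ℓ)(λ₀ + ℓ + 1)/6 ≤ t(t + 1)/6`; the staircase with `ℓ = ⌊(t + 1)/3⌋` and `λ₀ = t - ℓ` attains the bound.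
-/

theorem Nat.exists_le_lt_apply_succ {α : Type*} [LinearOrder α] {f : ℕ → α} {m : α} {a b : ℕ}
    (hab : a ≤ b) (ha : f a ≤ m) (hb : m < f b) :
    ∃ j, a ≤ j ∧ j < b ∧ f j ≤ m ∧ m < f (j + 1) := by
  induction b, hab using Nat.le_induction with
  | base => exact absurd hb (not_lt.2 ha)
  | succ b hab ih =>
    by_cases hmb : m < f b
    · obtain ⟨j, haj, hjb, hj⟩ := ih hmb
      exact ⟨j, haj, hjb.trans (Nat.lt_succ_self b), hj⟩
    · exact ⟨b, hab, Nat.lt_succ_self b, not_lt.1 hmb, hb⟩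

theorem List.lt_length_filter_le_iff {α : Type*} [LinearOrder α] {L : List α}
    (hL : L.Pairwise (· ≥ ·)) (a d : α) (i : ℕ) :
    i < (L.filter (a ≤ ·)).length ↔ i < L.length ∧ a ≤ L.getD i d := by
  induction L generalizing i with
  | nil => simp
  | cons b L ih =>
    obtain ⟨hb, hL⟩ := List.pairwise_cons.1 hL
    by_cases hab : a ≤ b
    · cases i <;> simp [hab, ih hL]
    · have hnil : L.filter (a ≤ ·) = [] :=
        List.filter_eq_nil_iff.2 fun c hc => by simpa using (hb c hc).trans_lt (not_le.1 hab)
      cases i with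
      | zero => simp [hab, hnil]
      | succ i => simpa [List.filter_cons, hab, hnil] using ih hL i

theorem two_mul_sum_range_sub (a n : ℕ) (h : n ≤ a + 1) :
    2 * ∑ k ∈ Finset.range n, (a - k) = n * (2 * a + 1 - n) := by
  induction n with
  | zero => simp
  | succ n ih =>
    obtain ⟨b, rfl⟩ : ∃ b, a = n + b := ⟨a - n, by omega⟩
    rw [Finset.sum_range_succ, mul_add, ih (by omega),
      show 2 * (n + b) + 1 - n = n + 2 * b + 1 by omega,
      show 2 * (n + b) + 1 - (n + 1) = n + 2 * b by omega, show n + b - n = b by omega]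
    ring

namespace Partn

variable (l : Partn)

theorem mem_betaSet {x : ℕ} :
    x ∈ l.betaSet ↔ ∃ i < l.parts.length, l.parts.getD i 0 + (l.parts.length - 1 - i) = x := by
  simp [betaSet]

theorem lt_length_of_le_getD {i j : ℕ} (hj : 1 ≤ j) (h : j ≤ l.parts.getD i 0) :
    i < l.parts.length := by
  by_contra hi
  rw [List.getD_eq_default _ _ (not_lt.1 hi)] at h
  omega

theorem lt_colLen_iff {i j : ℕ} (hj : 1 ≤ j) : i < l.colLen j ↔ j ≤ l.parts.getD i 0 := by
  rw [colLen, List.lt_length_filter_le_iff l.sorted]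
  exact and_iff_right_of_imp (l.lt_length_of_le_getD hj)

theorem colLen_le_length (j : ℕ) : l.colLen j ≤ l.parts.length :=
  List.length_filter_le _ _

theorem colLen_one : l.colLen 1 = l.parts.length :=
  congrArg List.length (List.filter_eq_self.2 fun p hp => decide_eq_true (l.pos p hp))

theorem colLen_getD_zero_succ : l.colLen (l.parts.getD 0 0 + 1) = 0 := by
  obtain ⟨_ | ⟨a, parts⟩, pos, sorted⟩ := l
  · rfl
  · refine List.length_eq_zero_iff.2 (List.filter_eq_nil_iff.2 fun p hp => ?_)
    have : p ≤ a := by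
      rcases List.mem_cons.1 hp with rfl | hp
      · exact le_rfl
      · exact List.rel_of_pairwise_cons sorted hp
    simpa using this

theorem getD_le_getD_zero (i : ℕ) : l.parts.getD i 0 ≤ l.parts.getD 0 0 := by
  by_contra h
  have := (l.lt_colLen_iff (i := i) (j := l.parts.getD 0 0 + 1) (Nat.le_add_left 1 _)).2 (by omega)
  rw [colLen_getD_zero_succ] at this
  omega

theorem one_le_getD {i : ℕ} (hi : i < l.parts.length) : 1 ≤ l.parts.getD i 0 := by
  rw [List.getD_eq_getElem _ _ hi]
  exact l.pos _ (List.getElem_mem hi)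

theorem one_le_of_mem_betaSet {x : ℕ} (hx : x ∈ l.betaSet) : 1 ≤ x := by
  obtain ⟨i, hi, rfl⟩ := l.mem_betaSet.1 hx
  have := l.one_le_getD hi
  omega

theorem mem_betaSet_of_lt_of_lt {j m : ℕ} (hj : 1 ≤ j)
    (hjm : j - 1 + (l.parts.length - l.colLen j) < m)
    (hmj : m < j + (l.parts.length - l.colLen (j + 1))) : m ∈ l.betaSet := by
  have hlen := l.colLen_le_length j
  set i := j + l.parts.length - 1 - m
  have hij : j ≤ l.parts.getD i 0 := (l.lt_colLen_iff hj).1 (by omega)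
  have hij' : ¬ j + 1 ≤ l.parts.getD i 0 := fun h => by
    have := (l.lt_colLen_iff (Nat.le_add_left 1 j)).2 h
    omega
  refine l.mem_betaSet.2 ⟨i, l.lt_length_of_le_getD hj hij, ?_⟩
  omega

theorem exists_hook_zero_of_notMem_betaSet {m : ℕ}
    (hm : m < l.parts.getD 0 0 + l.parts.length) (hmβ : m ∉ l.betaSet) :
    ∃ j, 1 ≤ j ∧ j ≤ l.parts.getD 0 0 ∧
      l.hook 0 j + m + 1 = l.parts.getD 0 0 + l.parts.length := by
  -- `f j = λ₀ + ℓ - 1 - hook 0 j` increases with `j`, and the values it skips between `f j` and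
  -- `f (j + 1)` are the β-numbers of the rows of length `j`
  set f : ℕ → ℕ := fun j => j - 1 + (l.parts.length - l.colLen j)
  have hf₁ : f 1 = 0 := by simp [f, colLen_one]
  have hf_end : f (l.parts.getD 0 0 + 1) = l.parts.getD 0 0 + l.parts.length := by
    simp only [f, colLen_getD_zero_succ]
    omega
  obtain ⟨j, hj, hjl, hfj, hfj₁⟩ := Nat.exists_le_lt_apply_succ (f := f)
    (Nat.le_add_left 1 _) (hf₁ ▸ Nat.zero_le m) (hf_end ▸ hm)
  have hfjm : f j = m := by
    by_contra hne
    exact hmβ (l.mem_betaSet_of_lt_of_lt hj (lt_of_le_of_ne hfj hne) hfj₁)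
  have hcol : 0 < l.colLen j := (l.lt_colLen_iff hj).2 (by omega)
  have := l.colLen_le_length j
  refine ⟨j, hj, by omega, ?_⟩
  simp only [hook, f] at hfjm ⊢
  omega

theorem hook_lt {i j : ℕ} (hi : i < l.parts.length) (hj : 1 ≤ j) :
    l.hook i j < l.parts.getD 0 0 + l.parts.length := by
  have := l.getD_le_getD_zero i
  have := l.one_le_getD hi
  have := l.colLen_le_length j
  unfold hook
  omega

theorem isCore_of_getD_zero_add_length_le {s : ℕ} (h : l.parts.getD 0 0 + l.parts.length ≤ s) :
    l.IsCore s := fun _ _ hi hj _ =>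
  Nat.not_dvd_of_pos_of_lt (Nat.succ_pos _) ((l.hook_lt hi hj).trans_le h)

variable {l}

theorem DistinctParts.getD_add_le (hd : l.DistinctParts) {i k : ℕ} (hik : i ≤ k)
    (hk : k < l.parts.length) : l.parts.getD k 0 + (k - i) ≤ l.parts.getD i 0 := by
  induction k, hik using Nat.le_induction with
  | base => simp
  | succ k hik ih =>
    have hlt := List.pairwise_iff_getElem.1 hd k (k + 1) (by omega) hk (Nat.lt_succ_self k)
    have := ih (by omega)
    rw [List.getD_eq_getElem _ _ hk]
    rw [List.getD_eq_getElem _ _ (by omega)] at this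
    omega

theorem DistinctParts.notMem_betaSet_of_succ_mem (hd : l.DistinctParts) {x : ℕ}
    (hx : x + 1 ∈ l.betaSet) : x ∉ l.betaSet := by
  intro hx'
  obtain ⟨i, hi, hix⟩ := l.mem_betaSet.1 hx
  obtain ⟨k, hk, hkx⟩ := l.mem_betaSet.1 hx'
  obtain hik | rfl | hki := lt_trichotomy i k
  · have := hd.getD_add_le hik.le hk
    omega
  · omega
  · have := hd.getD_add_le hki.le hi
    omega

theorem DistinctParts.getD_zero_add_length_le_of_isCore (hd : l.DistinctParts) {t : ℕ}
    (ht : l.IsCore t) (ht₁ : l.IsCore (t + 1)) : l.parts.getD 0 0 + l.parts.length ≤ t := by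
  by_contra! h
  obtain ⟨m, hm⟩ : ∃ m, l.parts.getD 0 0 + l.parts.length = m + t + 1 := ⟨_, (Nat.sub_add_cancel h).symm⟩
  by_cases hmβ : m ∈ l.betaSet
  · have := l.one_le_of_mem_betaSet hmβ
    obtain ⟨j, hj, hjl, hhook⟩ := l.exists_hook_zero_of_notMem_betaSet (m := m - 1) (by omega)
      (hd.notMem_betaSet_of_succ_mem (by rwa [Nat.sub_add_cancel this]))
    refine ht₁ 0 j (l.lt_length_of_le_getD hj hjl) hj hjl ⟨1, ?_⟩
    omega
  · obtain ⟨j, hj, hjl, hhook⟩ := l.exists_hook_zero_of_notMem_betaSet (by omega) hmβ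
    refine ht 0 j (l.lt_length_of_le_getD hj hjl) hj hjl ⟨1, ?_⟩
    omega

theorem DistinctParts.six_mul_size_le (hd : l.DistinctParts) :
    6 * l.size ≤ (l.parts.getD 0 0 + l.parts.length) * (l.parts.getD 0 0 + l.parts.length + 1) := by
  set a := l.parts.getD 0 0
  set n := l.parts.length
  have hsize : l.size ≤ ∑ k ∈ Finset.range n, (a - k) :=
    calc l.size = ∑ k : Fin n, l.parts[k] := (Fin.sum_univ_getElem _).symm
      _ ≤ ∑ k : Fin n, (a - k) := Finset.sum_le_sum fun k _ => by
        have := hd.getD_add_le (Nat.zero_le k) k.2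
        rw [List.getD_eq_getElem _ _ k.2] at this
        rw [Fin.getElem_fin]
        omega
      _ = ∑ k ∈ Finset.range n, (a - k) := Fin.sum_univ_eq_sum_range (a - ·) n
  have hn : n ≤ a + 1 := by
    rcases Nat.eq_zero_or_pos n with h | h
    · omega
    · have := hd.getD_add_le (Nat.zero_le (n - 1)) (by omega)
      have := l.one_le_getD (i := n - 1) (by omega)
      omega
  have hsum := two_mul_sum_range_sub a n hn
  -- `(a + n)(a + n + 1) - 3n(2a + 1 - n) = (a - 2n)(a - 2n + 1)`, a product of consecutive integers
  have hkey : 3 * (n * (2 * a + 1 - n)) ≤ (a + n) * (a + n + 1) := by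
    have : n ≤ 2 * a + 1 := by omega
    zify [this]
    rcases le_or_gt (2 * n) a with h | h <;> nlinarith
  omega

def staircase (a n : ℕ) (h : n ≤ a) : Partn where
  parts := List.ofFn fun i : Fin n => a - i
  pos := by
    simp only [List.mem_ofFn, forall_exists_index, forall_apply_eq_imp_iff]
    omega
  sorted := List.pairwise_ofFn.2 fun i j _ => by omega

section staircase

variable {a n : ℕ} (h : n ≤ a)

theorem staircase_distinctParts : (staircase a n h).DistinctParts :=
  List.pairwise_ofFn.2 fun i j hij => by
    have : (i : ℕ) < j := hij
    omega

theorem getD_zero_add_length_staircase_le :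
    (staircase a n h).parts.getD 0 0 + (staircase a n h).parts.length ≤ a + n := by
  cases n <;> simp [staircase]

theorem two_mul_size_staircase : 2 * (staircase a n h).size = n * (2 * a + 1 - n) := by
  rw [size, staircase, List.sum_ofFn, Fin.sum_univ_eq_sum_range (a - ·),
    two_mul_sum_range_sub a n (by omega)]

end staircase

theorem size_staircase_sub_div_three (t : ℕ) :
    (staircase (t - (t + 1) / 3) ((t + 1) / 3) (by omega)).size = t * (t + 1) / 6 := by
  have h := two_mul_size_staircase (a := t - (t + 1) / 3) (n := (t + 1) / 3) (by omega)
  generalize (staircase _ _ _).size = S at h ⊢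
  obtain ⟨q, rfl | rfl | rfl⟩ : ∃ q, t = 3 * q ∨ t = 3 * q + 1 ∨ t = 3 * q + 2 := ⟨t / 3, by omega⟩
  · rw [show (3 * q + 1) / 3 = q by omega, show 2 * (3 * q - q) + 1 - q = 3 * q + 1 by omega] at h
    symm; apply Nat.div_eq_of_lt_le <;> nlinarith
  · rw [show (3 * q + 1 + 1) / 3 = q by omega,
      show 2 * (3 * q + 1 - q) + 1 - q = 3 * q + 3 by omega] at h
    symm; apply Nat.div_eq_of_lt_le <;> nlinarith
  · rw [show (3 * q + 2 + 1) / 3 = q + 1 by omega,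
      show 2 * (3 * q + 2 - (q + 1)) + 1 - (q + 1) = 3 * q + 2 by omega] at h
    symm; apply Nat.div_eq_of_lt_le <;> nlinarith

end Partn

theorem largest_size_t_t_add_one_general (t : ℕ) :
    (∃ lam : Partn, (lam.IsCore t ∧ lam.IsCore (t + 1) ∧ lam.DistinctParts) ∧
        lam.size = t * (t + 1) / 6) ∧
      ∀ mu : Partn, (mu.IsCore t ∧ mu.IsCore (t + 1) ∧ mu.DistinctParts) →
        mu.size ≤ t * (t + 1) / 6 := by
  open Partn in
  refine ⟨?_, fun mu ⟨ht, ht₁, hd⟩ => ?_⟩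
  · set lam := staircase (t - (t + 1) / 3) ((t + 1) / 3) (by omega)
    have hlam : lam.parts.getD 0 0 + lam.parts.length ≤ t :=
      (getD_zero_add_length_staircase_le _).trans (by omega)
    exact ⟨lam, ⟨isCore_of_getD_zero_add_length_le _ hlam,
      isCore_of_getD_zero_add_length_le _ (hlam.trans t.le_succ), staircase_distinctParts _⟩,
      size_staircase_sub_div_three t⟩
  · have hmu := hd.getD_zero_add_length_le_of_isCore ht ht₁
    rw [Nat.le_div_iff_mul_le (by norm_num)]
    calc mu.size * 6 = 6 * mu.size := mul_comm _ _
      _ ≤ _ := hd.six_mul_size_le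
      _ ≤ t * (t + 1) := Nat.mul_le_mul hmu (by omega)

/-- The largest size of a `(t, t+1)`-core partition with distinct parts is `⌊t(t+1)/6⌋`. -/
theorem largest_size_t_t_add_one (t : ℕ) (ht : 2 ≤ t) :
    (∃ lam : Partn, (lam.IsCore t ∧ lam.IsCore (t + 1) ∧ lam.DistinctParts) ∧
        lam.size = t * (t + 1) / 6) ∧
      ∀ mu : Partn, (mu.IsCore t ∧ mu.IsCore (t + 1) ∧ mu.DistinctParts) →
        mu.size ≤ t * (t + 1) / 6 :=
  largest_size_t_t_add_one_general t
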